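/- arXiv:2407.21158 — 2 statements merged into one kernel-verified Lean document; each statement's English description precedes it below -/
import Mathlib

section
/- If c = −1 and α² > 4 (as holds for α = 2·coth(2r) with r > 0), then mα² − 4c ≠ 0 and (4m² − 1)α⁴ − 12cα² − 96 > 0 for every integer m ≥ 2; hence the equation m(4m²−1)α⁶ − 4c(4m²+3m−1)α⁴ − 48(2m−1)α² + 384c = 0 has no solution. -/
/-- In the hyperbolic case (c = −1, α² > 4) both factors of the sextic are
nonvanishing, hence there are no 2-type class-B hypersurfaces in quaternionic
hyperbolic space. -/
theorem stmt2 (m : ℕ) (hm : 2 ≤ m) (c : ℝ) (hc : c = -1) (α : ℝ) (hα : α ^ 2 > 4) :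
    (m : ℝ) * α ^ 2 - 4 * c ≠ 0 ∧
    (4 * (m : ℝ) ^ 2 - 1) * α ^ 4 - 12 * c * α ^ 2 - 96 > 0 ∧
    (m : ℝ) * (4 * (m : ℝ) ^ 2 - 1) * α ^ 6 - 4 * c * (4 * (m : ℝ) ^ 2 + 3 * m - 1) * α ^ 4
      - 48 * (2 * (m : ℝ) - 1) * α ^ 2 + 384 * c ≠ 0 := by
  subst hc
  have hm' : (2 : ℝ) ≤ (m : ℝ) := by exact_mod_cast hm
  have h1 : (m : ℝ) * α ^ 2 - 4 * (-1) > 0 := by nlinarith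
  have h2 : (4 * (m : ℝ) ^ 2 - 1) * α ^ 4 - 12 * (-1) * α ^ 2 - 96 > 0 := by
    have h4 : α ^ 4 > 16 := by nlinarith
    have hm2 : (m : ℝ) ^ 2 ≥ 4 := by nlinarith
    nlinarith
  refine ⟨ne_of_gt h1, h2, ?_⟩
  have key : (m : ℝ) * (4 * (m : ℝ) ^ 2 - 1) * α ^ 6 - 4 * (-1) * (4 * (m : ℝ) ^ 2 + 3 * m - 1) * α ^ 4
      - 48 * (2 * (m : ℝ) - 1) * α ^ 2 + 384 * (-1)
      = ((m : ℝ) * α ^ 2 - 4 * (-1)) * ((4 * (m : ℝ) ^ 2 - 1) * α ^ 4 - 12 * (-1) * α ^ 2 - 96) := by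
    ring
  rw [key]
  positivity
end

section
/- Let c ∈ {1,−1} and let μ, ν be nonzero reals with μν = −c; set α = μ + ν, f = Lμ + Kν, f₂ = Lμ² + Kν² − 6c, where K, L > 0 and n = K + L − 3. Then the condition f[f₂ + f² − c(n+1)] + 2αf(f + α) − 4cα = 0 is equivalent to [(L+1)μ² − c(K+1)]·[L(L+2)μ⁴ − 2c(LK+K+L+2)μ² + K(K+2)] = 0. -/
/-- The 2-type consistency condition for class-A₂ hypersurfaces is equivalent,
after substituting ν = −c/μ, to a factored polynomial equation. -/
theorem stmt10 (c : ℝ) (hc : c = 1 ∨ c = -1) (K L n : ℝ) (hK : 0 < K) (hL : 0 < L)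
    (hn : n = K + L - 3) (μ ν α f f2 : ℝ) (hμ : μ ≠ 0) (hν : ν ≠ 0)
    (hmn : μ * ν = -c) (hα : α = μ + ν) (hf : f = L * μ + K * ν)
    (hf2 : f2 = L * μ ^ 2 + K * ν ^ 2 - 6 * c) :
    (f * (f2 + f ^ 2 - c * (n + 1)) + 2 * α * f * (f + α) - 4 * c * α = 0) ↔
    ((L + 1) * μ ^ 2 - c * (K + 1)) *
      (L * (L + 2) * μ ^ 4 - 2 * c * (L * K + K + L + 2) * μ ^ 2 + K * (K + 2)) = 0 := by
  have hμ3 : μ ^ 3 ≠ 0 := pow_ne_zero _ hμ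
  have key : (f * (f2 + f ^ 2 - c * (n + 1)) + 2 * α * f * (f + α) - 4 * c * α) * μ ^ 3 =
      ((L + 1) * μ ^ 2 - c * (K + 1)) *
        (L * (L + 2) * μ ^ 4 - 2 * c * (L * K + K + L + 2) * μ ^ 2 + K * (K + 2)) := by
    subst hα hf hf2 hn
    have hνv : ν = -c / μ := by field_simp; linarith [hmn]
    subst hνv
    rcases hc with h | h <;> subst h <;> field_simp <;> ring
  constructor
  · intro h
    rw [← key, h, zero_mul]
  · intro h
    rw [h] at key
    exact (mul_eq_zero.mp key).resolve_right hμ3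
end
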